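/- arXiv:2104.10250 — 3 statements merged into one kernel-verified Lean document; each statement's English description precedes it below -/
import Mathlib

section
/- Let p be an odd prime, let a ∈ ℕ with gcd(a,p) = 1, and let N ∈ ℕ. Then Σ_{x ∈ (ℤ/pℤ)^N} e^{2πi·a(θ_N(x) − x_N²)/p} equals p if N ≤ 2, and equals p · G_{N−2}(a,p) if N > 2. -/
open Complex Finset Filter
open scoped Classical

/-- Number of partitions of `n`. -/
noncomputable def partitionCount (n : ℕ) : ℕ := Fintype.card (Nat.Partition n)

/-- `P(x)` for rational `x`: the number of partitions of `x` when `x` is a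
nonnegative integer, and `0` otherwise. -/
noncomputable def Pq (x : ℚ) : ℕ :=
  if h : ∃ m : ℕ, (m : ℚ) = x then partitionCount h.choose else 0

/-- The quadratic form `θ_k(x) = Σ x_i² + Σ_{i<j} x_i x_j` on `ℤ^k`. -/
def thetaInt (k : ℕ) (x : Fin k → ℤ) : ℤ :=
  (∑ i, x i ^ 2) + ∑ i, ∑ j ∈ Finset.Ioi i, x i * x j

/-- `r_k(n)`: the number of `x ∈ ℤ^k` with `θ_k(x) = n`. -/
noncomputable def rTheta (k n : ℕ) : ℕ :=
  Nat.card {x : Fin k → ℤ // thetaInt k x = (n : ℤ)}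

/-- `V_r(m)`: the coefficient of `q^m` in `1/(q;q)_∞^r`. -/
noncomputable def Vpart (r m : ℕ) : ℕ :=
  ∑ x ∈ Finset.Nat.antidiagonalTuple r m, ∏ i, partitionCount (x i)

/-- `cφ_N(n)`, the number of `N`-colored generalized Frobenius partitions of `n`. -/
noncomputable def cphi (N n : ℕ) : ℕ :=
  ∑ p ∈ Finset.HasAntidiagonal.antidiagonal n, rTheta (N - 1) p.1 * Vpart N p.2

/-- The quadratic Gauss sum `G_k(a,c) = Σ_{x ∈ (ℤ/cℤ)^k} e^{2πi a θ_k(x)/c}`,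
with the sum taken over the representatives `0,…,c−1` of `ℤ/cℤ`. -/
noncomputable def GaussG (k : ℕ) (a : ℤ) (c : ℕ) : ℂ :=
  ∑ x : Fin k → Fin c,
    Complex.exp (2 * Real.pi * I * a * thetaInt k (fun i => (x i : ℤ)) / c)

/-!
Write `x = (y, t)` with `t` the last coordinate. Then `θ(y, t) - t² = θ(y) + t·Σy`, so summing the
additive character over `t` gives `p` times the indicator of `Σy = 0`. On that hyperplane, writing
`y = (z, s)` forces `s = -Σz`, and `θ(z, s) = θ(z) + s·(s + Σz) = θ(z)`; what is left is `p · G_{N-2}`.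
-/

theorem Fin.sum_Ioi_castSucc {M : Type*} [AddCommMonoid M] {n : ℕ} (f : Fin (n + 1) → M)
    (i : Fin n) : ∑ j ∈ Ioi i.castSucc, f j = ∑ j ∈ Ioi i, f j.castSucc + f (Fin.last n) := by
  rw [← Ioc_top, Fin.top_eq_last, ← Ioo_insert_right (Fin.castSucc_lt_last i),
    sum_insert (by simp), ← Fin.map_castSuccEmb_Ioi, sum_map, add_comm]
  rfl

theorem Fin.sum_univ_pi_succ_eq_sum_snoc {α M : Type*} [Fintype α] [AddCommMonoid M] {n : ℕ}
    (f : (Fin (n + 1) → α) → M) : ∑ x, f x = ∑ y : Fin n → α, ∑ t : α, f (Fin.snoc y t) :=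
  ((Fin.snocEquiv fun _ ↦ α).sum_comp f).symm.trans (Fintype.sum_prod_type_right _)

section ThetaForm

variable {R : Type*} [CommRing R]

def thetaForm {k : ℕ} (x : Fin k → R) : R :=
  (∑ i, x i ^ 2) + ∑ i, ∑ j ∈ Ioi i, x i * x j

theorem thetaInt_eq_thetaForm (k : ℕ) (x : Fin k → ℤ) : thetaInt k x = thetaForm x := rfl

@[simp]
theorem thetaForm_fin_zero (x : Fin 0 → R) : thetaForm x = 0 := by
  simp [thetaForm]

@[simp, norm_cast]
theorem Int.cast_thetaForm {k : ℕ} (x : Fin k → ℤ) :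
    ((thetaForm x : ℤ) : R) = thetaForm fun i ↦ (x i : R) := by
  simp [thetaForm]

theorem thetaForm_snoc {k : ℕ} (y : Fin k → R) (t : R) :
    thetaForm (Fin.snoc y t : Fin (k + 1) → R) = thetaForm y + t ^ 2 + t * ∑ i, y i := by
  have h : Ioi (Fin.last k) = ∅ := Ioi_top
  simp only [thetaForm, Fin.sum_univ_castSucc, Fin.sum_Ioi_castSucc, Fin.snoc_castSucc,
    Fin.snoc_last, h, sum_empty, sum_add_distrib, ← sum_mul]
  ring

end ThetaForm

section CharacterSum

variable {R : Type*} [CommRing R] [Fintype R] [DecidableEq R]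

theorem sum_thetaForm_sub_sq_last {R' : Type*} [CommRing R'] [IsDomain R']
    {ψ : AddChar R R'} (hψ : ψ.IsPrimitive) (n : ℕ) :
    ∑ x : Fin (n + 1) → R, ψ (thetaForm x - x (Fin.last n) ^ 2) =
      Fintype.card R * ∑ y : Fin n → R, if ∑ i, y i = 0 then ψ (thetaForm y) else 0 := by
  rw [Fin.sum_univ_pi_succ_eq_sum_snoc, mul_sum]
  refine sum_congr rfl fun y _ ↦ ?_
  have h (t : R) : thetaForm (Fin.snoc y t : Fin (n + 1) → R) - t ^ 2 =
      thetaForm y + t * ∑ i, y i := by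
    rw [thetaForm_snoc]; ring
  simp only [Fin.snoc_last, h, AddChar.map_add_eq_mul, ← mul_sum, AddChar.sum_mulShift _ hψ]
  split_ifs <;> simp [mul_comm]

theorem sum_thetaForm_of_sum_eq_zero {M : Type*} [AddCommMonoid M] (f : R → M) (k : ℕ) :
    ∑ y : Fin (k + 1) → R, (if ∑ i, y i = 0 then f (thetaForm y) else 0) =
      ∑ z : Fin k → R, f (thetaForm z) := by
  rw [Fin.sum_univ_pi_succ_eq_sum_snoc]
  refine sum_congr rfl fun z _ ↦ ?_
  have h : thetaForm (Fin.snoc z (-∑ i, z i) : Fin (k + 1) → R) = thetaForm z := by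
    rw [thetaForm_snoc]; ring
  simp only [Fin.sum_univ_castSucc, Fin.snoc_castSucc, Fin.snoc_last, add_eq_zero_iff_eq_neg']
  rw [sum_ite_eq', if_pos (mem_univ _), h]

end CharacterSum

section StdAddChar

variable (p : ℕ) [NeZero p]

theorem exp_two_pi_I_mul_div_eq_stdAddChar (a m : ℤ) :
    exp (2 * Real.pi * I * a * m / p) = (ZMod.stdAddChar.mulShift (a : ZMod p)) (m : ZMod p) := by
  rw [AddChar.mulShift_apply, ← Int.cast_mul, ZMod.stdAddChar_coe]
  push_cast
  ring_nf

theorem isPrimitive_stdAddChar_mulShift {a : ℕ} (ha : a.Coprime p) :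
    (ZMod.stdAddChar.mulShift (a : ZMod p)).IsPrimitive := by
  intro b hb
  rw [AddChar.mulShift_mulShift]
  exact ZMod.isPrimitive_stdAddChar p
    (((ZMod.isUnit_iff_coprime a p).mpr ha).mul_right_eq_zero.not.mpr hb)

theorem ZMod.bijective_natCast_fin_val :
    Function.Bijective fun t : Fin p ↦ ((t : ℕ) : ZMod p) := by
  refine (Fintype.bijective_iff_injective_and_card _).mpr ⟨fun s t h ↦ ?_, by simp⟩
  have := congrArg ZMod.val h
  simp only [ZMod.val_natCast, Nat.mod_eq_of_lt s.isLt, Nat.mod_eq_of_lt t.isLt] at this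
  exact Fin.ext this

theorem sum_fin_pi_eq_sum_zmod_pi {M : Type*} [AddCommMonoid M] (k : ℕ)
    (f : (Fin k → ZMod p) → M) :
    ∑ x : Fin k → Fin p, f (fun i ↦ ((x i : ℤ) : ZMod p)) = ∑ x : Fin k → ZMod p, f x :=
  Fintype.sum_bijective _ (ZMod.bijective_natCast_fin_val p).comp_left _ _
    fun _ ↦ by simp only [Int.cast_natCast]; rfl

theorem gaussG_eq_sum_zmod (k : ℕ) (a : ℤ) :
    GaussG k a p = ∑ x : Fin k → ZMod p, ZMod.stdAddChar.mulShift (a : ZMod p) (thetaForm x) := by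
  unfold GaussG
  rw [← sum_fin_pi_eq_sum_zmod_pi p k]
  refine sum_congr rfl fun x _ ↦ ?_
  rw [exp_two_pi_I_mul_div_eq_stdAddChar, thetaInt_eq_thetaForm, Int.cast_thetaForm]

theorem sum_exp_thetaInt_sub_sq_last {a : ℕ} (n : ℕ) :
    ∑ x : Fin (n + 1) → Fin p, exp (2 * Real.pi * I * a *
        (thetaInt (n + 1) (fun i ↦ (x i : ℤ)) - (x (Fin.last n) : ℤ) ^ 2) / p) =
      ∑ x : Fin (n + 1) → ZMod p,
        ZMod.stdAddChar.mulShift (a : ZMod p) (thetaForm x - x (Fin.last n) ^ 2) := by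
  rw [← sum_fin_pi_eq_sum_zmod_pi p]
  refine sum_congr rfl fun x _ ↦ ?_
  convert exp_two_pi_I_mul_div_eq_stdAddChar p a
    (thetaInt (n + 1) (fun i ↦ (x i : ℤ)) - (x (Fin.last n) : ℤ) ^ 2) using 2 <;>
  push_cast [thetaInt_eq_thetaForm] <;> rfl

end StdAddChar

theorem stmt6 (p : ℕ) (hp : p.Prime) (a : ℕ) (ha : Nat.Coprime a p)
    (N : ℕ) (hN : 0 < N) :
    (∑ x : Fin N → Fin p,
        Complex.exp (2 * Real.pi * Complex.I * a *
          (thetaInt N (fun i => (x i : ℤ)) - (x ⟨N - 1, by omega⟩ : ℤ) ^ 2) / p)) =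
      if N ≤ 2 then (p : ℂ) else (p : ℂ) * GaussG (N - 2) (a : ℤ) p := by
  have : NeZero p := ⟨hp.ne_zero⟩
  obtain ⟨n, rfl⟩ : ∃ n, N = n + 1 := ⟨N - 1, by omega⟩
  refine (sum_exp_thetaInt_sub_sq_last p n).trans ?_
  rw [sum_thetaForm_sub_sq_last (isPrimitive_stdAddChar_mulShift p ha), ZMod.card]
  rcases n with _ | k
  · simp
  · rw [sum_thetaForm_of_sum_eq_zero, gaussG_eq_sum_zmod, Int.cast_natCast]
    split_ifs with hk
    · obtain rfl : k = 0 := by omega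
      simp
    · rfl
end

section
/- Let p be an odd prime and let C_p(R) = (4(1−R))^{-1} on (ℤ/pℤ)∖{1}. Then Π_{t=1}^{p−2} ((1 − C_p^{t−1}(0)) / p) = (−1)^{(p−1)/2} · ((p+1)/2 / p), where ((1 − C_p^{t−1}(0))/p) denotes the Legendre symbol of a representative of 1 − C_p^{t−1}(0) ∈ ℤ/pℤ, and ((p+1)/2 / p) is the Legendre symbol of (p+1)/2 modulo p. -/
/-!
Over any field with `2 ≠ 0`, the orbit of `0` under `R ↦ (4(1 - R))⁻¹` is `t / (2(t + 1))` as long as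
no `t + 1` vanishes, so `1 - C^{t-1}(0) = (t + 1) / (2t)` and the product telescopes to
`(p - 1) / 2^{p-2} = -2` in `ZMod p`, by Fermat. Multiplicativity of the quadratic character then
gives `(-2 / p) = (-1 / p) (2 / p)`, and `(p + 1) / 2 ≡ 2⁻¹` has the same character as `2`.
-/

open Complex Finset Filter
open scoped Classical

/-- The map `C_p(R) = (4(1−R))⁻¹` on `ℤ/pℤ`. -/
def CFun (p : ℕ) (R : ZMod p) : ZMod p := (4 * (1 - R))⁻¹

theorem prod_Icc_one_sub_one_eq_prod_range {M : Type*} [CommMonoid M] (f : ℕ → M) (n : ℕ) :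
    ∏ t ∈ Icc 1 n, f (t - 1) = ∏ k ∈ range n, f k := by
  rw [range_eq_Ico, ← prod_Ico_add_right_sub_eq (c := 1), zero_add, Ico_add_one_right_eq_Icc]

section Field

variable {K : Type*} [Field K]

theorem iterate_inv_four_mul_one_sub_zero (h2 : (2 : K) ≠ 0) {t : ℕ}
    (ht : ∀ k < t, (k + 1 : K) ≠ 0) :
    (fun R : K => (4 * (1 - R))⁻¹)^[t] 0 = t / (2 * (t + 1)) := by
  induction t with
  | zero => simp
  | succ t ih =>
    have ht1 : (t + 1 : K) ≠ 0 := ht t t.lt_succ_self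
    rw [Function.iterate_succ_apply', ih fun k hk => ht k (hk.trans t.lt_succ_self)]
    have hden : 4 * (1 - t / (2 * (t + 1))) = 2 * (t + 1 + 1) / (t + 1 : K) := by
      field_simp
      ring
    -- if `t + 2 = 0` both sides are `0`, since `0⁻¹ = 0`; so no hypothesis on `t + 2` is needed
    rw [hden, inv_div]
    push_cast
    ring

theorem prod_range_one_sub_iterate_inv_four_mul_one_sub (h2 : (2 : K) ≠ 0) {n : ℕ}
    (hn : ∀ k < n, (k + 1 : K) ≠ 0) :
    ∏ k ∈ range n, (1 - (fun R : K => (4 * (1 - R))⁻¹)^[k] 0) = (n + 1) / 2 ^ n := by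
  induction n with
  | zero => simp
  | succ n ih =>
    have hn1 := hn n n.lt_succ_self
    rw [prod_range_succ, ih fun k hk => hn k (hk.trans n.lt_succ_self),
      iterate_inv_four_mul_one_sub_zero h2 fun k hk => hn k (hk.trans n.lt_succ_self)]
    push_cast
    field_simp
    ring

end Field

theorem quadraticChar_inv {F : Type*} [Field F] [Fintype F] [DecidableEq F] (a : F) :
    quadraticChar F a⁻¹ = quadraticChar F a := by
  rw [← MulChar.inv_apply', (quadraticChar_isQuadratic F).inv]

namespace ZMod

variable {p : ℕ} [Fact p.Prime]

theorem natCast_add_one_ne_zero {k : ℕ} (hk : k + 1 < p) : (k + 1 : ZMod p) ≠ 0 := by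
  exact_mod_cast (natCast_eq_zero_iff (k + 1) p).not.mpr (Nat.not_dvd_of_pos_of_lt k.succ_pos hk)

theorem prod_range_one_sub_CFun_iterate (hp : p ≠ 2) :
    ∏ k ∈ range (p - 2), (1 - (CFun p)^[k] 0) = -2 := by
  have h2 : (2 : ZMod p) ≠ 0 := Ring.two_ne_zero (by rwa [ringChar_zmod_n])
  have hp2 : 2 ≤ p := (Fact.out : p.Prime).two_le
  rw [show CFun p = fun R => (4 * (1 - R))⁻¹ from rfl,
    prod_range_one_sub_iterate_inv_four_mul_one_sub h2 fun k hk =>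
      natCast_add_one_ne_zero (by omega),
    Nat.cast_sub hp2, natCast_self]
  have hfermat : 2 ^ (p - 2) * 2 = (1 : ZMod p) := by
    rw [← pow_succ, show p - 2 + 1 = p - 1 by omega, pow_card_sub_one_eq_one h2]
  field_simp
  push_cast
  linear_combination hfermat

theorem natCast_add_one_div_two (hp : p ≠ 2) : (((p + 1) / 2 : ℕ) : ZMod p) = 2⁻¹ := by
  have hodd : p % 2 = 1 := Nat.odd_iff.mp ((Fact.out : p.Prime).odd_of_ne_two hp)
  refine eq_inv_of_mul_eq_one_left ?_
  have hdiv : (p + 1) / 2 * 2 = p + 1 := Nat.div_mul_cancel (by omega)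
  exact_mod_cast (congrArg (Nat.cast : ℕ → ZMod p) hdiv).trans (by simp)

end ZMod

theorem jacobiSym_natCast_eq_quadraticChar (p : ℕ) [Fact p.Prime] (n : ℕ) :
    jacobiSym n p = quadraticChar (ZMod p) n := by
  rw [← jacobiSym.legendreSym.to_jacobiSym]
  simp [legendreSym]

theorem stmt15 (p : ℕ) (hp : p.Prime) (hodd : p ≠ 2) :
    (∏ t ∈ Finset.Icc 1 (p - 2),
        jacobiSym (((1 - (CFun p)^[t - 1] 0 : ZMod p).val : ℤ)) p) =
      (-1) ^ ((p - 1) / 2) * jacobiSym (((p + 1) / 2 : ℕ) : ℤ) p := by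
  have : Fact p.Prime := ⟨hp⟩
  have hchar : ringChar (ZMod p) ≠ 2 := by rwa [ZMod.ringChar_zmod_n]
  have hp_odd : p % 2 = 1 := Nat.odd_iff.mp (hp.odd_of_ne_two hodd)
  simp_rw [jacobiSym_natCast_eq_quadraticChar, ZMod.natCast_val, ZMod.cast_id', id]
  rw [prod_Icc_one_sub_one_eq_prod_range (fun k => quadraticChar (ZMod p) (1 - (CFun p)^[k] 0)),
    ← map_prod, ZMod.prod_range_one_sub_CFun_iterate hodd, ZMod.natCast_add_one_div_two hodd,
    quadraticChar_inv, show (-2 : ZMod p) = -1 * 2 by ring, map_mul, quadraticChar_neg_one hchar,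
    ZMod.card, ZMod.χ₄_eq_neg_one_pow hp_odd, show p / 2 = (p - 1) / 2 by omega]
end

section
/- Let r ≥ 1 be an integer and let V_r(n) = Σ_{(x_1,…,x_r) ∈ ℕ₀^r, x_1+⋯+x_r = n} Π_{i=1}^r P(x_i). Then lim_{n→∞} V_{r−1}(n)/V_r(n) = 0. -/
/-!
Removing `j` from a partition of `m ≥ j` loses little: `P(m) ≤ (j + 1) P(j) P(m - j)`. If
`s j ≤ n`, some coordinate of an `s`-tuple with sum `n` is at least `j`, so lowering it gives
`V_s(n) ≤ s (j + 1) P(j) V_s(n - j)`. Hence in `V_{s+1}(n) = Σ_j P(j) V_s(n - j)` each term with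
`j ≤ n / s` is at least `V_s(n) / (s (j + 1))`, so `V_{s+1}(n) / V_s(n)` grows at least like a
harmonic sum, which diverges.
-/

open Complex Finset Filter
open scoped Classical

namespace Multiset

def mergeOnes (d : ℕ) (μ : Multiset ℕ) : Multiset ℕ :=
  if d = 0 then μ else μ.filter (· ≠ 1) + {μ.count 1 + d}

/-- Parts `≤ j` are peeled off into `γ`. Once every remaining part exceeds the deficit
`d = j - γ.sum > 0`, one part `a` is replaced by `a - d` ones, which `mergeOnes d` undoes because
no other part equals `1`. -/
theorem exists_eq_mergeOnes_add (j : ℕ) (s : Multiset ℕ) (hs : ∀ a ∈ s, 0 < a)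
    (hj : j ≤ s.sum) :
    ∃ μ γ : Multiset ℕ, (∀ a ∈ μ, 0 < a) ∧ (∀ a ∈ γ, 0 < a) ∧ γ.sum ≤ j ∧
      μ.sum + j = s.sum ∧ s = mergeOnes (j - γ.sum) μ + γ := by
  induction s using Multiset.strongInductionOn generalizing j with
  | ih s ih =>
  rcases Nat.eq_zero_or_pos j with rfl | hj0
  · exact ⟨s, 0, hs, by simp, by simp, by simp, by simp [mergeOnes]⟩
  by_cases hpeel : ∃ a ∈ s, a ≤ j
  · obtain ⟨a, has, haj⟩ := hpeel
    have hs' : s = a ::ₘ s.erase a := (cons_erase has).symm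
    have hsum : a + (s.erase a).sum = s.sum := by rw [← sum_cons, cons_erase has]
    obtain ⟨μ, γ, hμ, hγ, hγj, hμsum, heq⟩ := ih (s.erase a) (erase_lt.mpr has) (j - a)
      (fun b hb => hs b (mem_of_mem_erase hb)) (by omega)
    refine ⟨μ, a ::ₘ γ, hμ, ?_, by rw [sum_cons]; omega, by omega, ?_⟩
    · simpa [forall_mem_cons] using ⟨hs a has, hγ⟩
    · rw [sum_cons, ← Nat.sub_sub, add_cons, ← heq, ← hs']
  · have hlarge : ∀ a ∈ s, j < a := by simpa using hpeel
    obtain ⟨a, has⟩ := exists_mem_of_ne_zero (s := s) (by rintro rfl; simp at hj; omega)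
    have hnone : ∀ b ∈ s.erase a, b ≠ 1 := fun b hb => by
      have := hlarge b (mem_of_mem_erase hb); omega
    have haj := hlarge a has
    refine ⟨s.erase a + replicate (a - j) 1, 0, ?_, by simp, by simp, ?_, ?_⟩
    · simpa [or_imp, forall_and] using ⟨fun b hb => hs b (mem_of_mem_erase hb),
        fun _ h => (eq_of_mem_replicate h).symm ▸ one_pos⟩
    · have hsum : a + (s.erase a).sum = s.sum := by rw [← sum_cons, cons_erase has]
      rw [sum_add, sum_replicate, smul_eq_mul, mul_one]
      omega
    · have hfilter : (s.erase a + replicate (a - j) 1).filter (· ≠ 1) = s.erase a := by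
        rw [filter_add, filter_eq_self.mpr hnone,
          filter_eq_nil.mpr fun b hb => by simp [eq_of_mem_replicate hb], add_zero]
      have hcount : (s.erase a).count 1 = 0 := count_eq_zero.mpr fun h => hnone 1 h rfl
      rw [sum_zero, Nat.sub_zero, mergeOnes, if_neg hj0.ne', hfilter, count_add, hcount,
        count_replicate_self, zero_add, Nat.sub_add_cancel haj.le, add_zero, add_comm,
        singleton_add, cons_erase has]

end Multiset

theorem partitionCount_le_mul_sum {j m : ℕ} (hj : j ≤ m) :
    partitionCount m ≤ partitionCount (m - j) * ∑ u ∈ range (j + 1), partitionCount u := by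
  let decode : Nat.Partition (m - j) × (Σ u : Fin (j + 1), Nat.Partition u) → Multiset ℕ :=
    fun x => Multiset.mergeOnes (j - x.2.1) x.1.parts + x.2.2.parts
  have hsurj : ∀ p : Nat.Partition m, ∃ x, decode x = p.parts := by
    intro p
    obtain ⟨μ, γ, hμ, hγ, hγj, hμsum, heq⟩ :=
      Multiset.exists_eq_mergeOnes_add j p.parts (fun _ => p.parts_pos) (p.parts_sum.symm ▸ hj)
    rw [p.parts_sum] at hμsum
    exact ⟨(⟨μ, fun h => hμ _ h, by omega⟩, ⟨⟨γ.sum, by omega⟩, ⟨γ, fun h => hγ _ h, rfl⟩⟩),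
      heq.symm⟩
  choose enc henc using hsurj
  calc partitionCount m
      ≤ Fintype.card (Nat.Partition (m - j) × (Σ u : Fin (j + 1), Nat.Partition u)) :=
        Fintype.card_le_of_injective enc fun p q h =>
          Nat.Partition.ext (by rw [← henc, ← henc, h])
    _ = _ := by
      rw [Fintype.card_prod, Fintype.card_sigma,
        Fin.sum_univ_eq_sum_range (fun u => Fintype.card (Nat.Partition u))]
      rfl

theorem partitionCount_mono : Monotone partitionCount :=
  monotone_nat_of_le_succ fun n => Fintype.card_le_of_injective
    (fun p => ⟨1 ::ₘ p.parts, by simpa using fun _ => p.parts_pos,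
      by simp [p.parts_sum, add_comm]⟩)
    fun _ _ h => Nat.Partition.ext ((Multiset.cons_inj_right 1).mp (congrArg Nat.Partition.parts h))

theorem partitionCount_le_mul {j m : ℕ} (hj : j ≤ m) :
    partitionCount m ≤ (j + 1) * partitionCount j * partitionCount (m - j) := by
  calc partitionCount m ≤ partitionCount (m - j) * ∑ u ∈ range (j + 1), partitionCount u :=
        partitionCount_le_mul_sum hj
    _ ≤ partitionCount (m - j) * ((j + 1) * partitionCount j) := by
        gcongr
        simpa using sum_le_card_nsmul _ _ _
          fun u hu => partitionCount_mono (Nat.lt_succ_iff.mp (mem_range.mp hu))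
    _ = (j + 1) * partitionCount j * partitionCount (m - j) := by ring

theorem Vpart_succ (s n : ℕ) :
    Vpart (s + 1) n = ∑ k ∈ range (n + 1), partitionCount k * Vpart s (n - k) := by
  simp only [Vpart, mul_sum]
  rw [sum_sigma']
  refine sum_nbij' (fun x => ⟨x 0, Fin.tail x⟩) (fun z => Fin.cons z.1 z.2)
    ?_ ?_ (fun x _ => Fin.cons_self_tail x) (fun z _ => rfl) (fun x _ => Fin.prod_univ_succ _)
  · intro x hx
    simp only [mem_sigma, mem_range, Nat.mem_antidiagonalTuple] at hx ⊢
    rw [Fin.sum_univ_succ] at hx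
    exact ⟨by omega, by simp only [Fin.tail]; omega⟩
  · rintro ⟨k, y⟩ hz
    simp only [mem_sigma, mem_range, Nat.mem_antidiagonalTuple] at hz ⊢
    rw [Fin.sum_univ_succ]
    simp only [Fin.cons_zero, Fin.cons_succ]
    omega

theorem Vpart_zero_right (s : ℕ) : Vpart s 0 = 1 := by
  simp [Vpart, Nat.antidiagonalTuple_zero_right, partitionCount]

theorem Vpart_succ_pos (s n : ℕ) : 0 < Vpart (s + 1) n := by
  rw [Vpart_succ]
  refine lt_of_lt_of_le ?_ (single_le_sum (fun k _ => Nat.zero_le _) (self_mem_range_succ n))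
  simpa [Vpart_zero_right, partitionCount] using Fintype.card_pos

theorem prod_partitionCount_add_single_le {s : ℕ} (y : Fin s → ℕ) (i : Fin s) (j : ℕ) :
    ∏ k, partitionCount ((y + Pi.single i j : Fin s → ℕ) k) ≤
      (j + 1) * partitionCount j * ∏ k, partitionCount (y k) := by
  have hrest : ∏ k ∈ univ.erase i, partitionCount ((y + Pi.single i j : Fin s → ℕ) k) =
      ∏ k ∈ univ.erase i, partitionCount (y k) :=
    prod_congr rfl fun k hk => by simp [ne_of_mem_erase hk]
  have hi : partitionCount (y i + j) ≤ (j + 1) * partitionCount j * partitionCount (y i) := by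
    simpa using partitionCount_le_mul (Nat.le_add_left j (y i))
  rw [← mul_prod_erase univ _ (mem_univ i), ← mul_prod_erase univ _ (mem_univ i), hrest,
    ← mul_assoc]
  simpa using Nat.mul_le_mul_right _ hi

theorem sum_filter_le_mul_Vpart {s j n : ℕ} (i : Fin s) (hjn : j ≤ n) :
    ∑ x ∈ (Nat.antidiagonalTuple s n).filter (fun x => j ≤ x i), ∏ k, partitionCount (x k) ≤
      (j + 1) * partitionCount j * Vpart s (n - j) := by
  have hsingle : ∀ x : Fin s → ℕ, j ≤ x i → Pi.single i j ≤ x := fun x hx k => by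
    rcases eq_or_ne k i with rfl | hk <;> simp [*]
  have hshift : ∑ y ∈ Nat.antidiagonalTuple s (n - j),
      ∏ k, partitionCount ((y + Pi.single i j : Fin s → ℕ) k)
      = ∑ x ∈ (Nat.antidiagonalTuple s n).filter (fun x => j ≤ x i), ∏ k, partitionCount (x k) := by
    refine sum_nbij' (fun y => y + Pi.single i j) (fun x => x - Pi.single i j) ?_ ?_ ?_ ?_ ?_
    · intro y hy
      simp only [mem_filter, Nat.mem_antidiagonalTuple] at hy ⊢
      simp [sum_add_distrib, hy]
      omega
    · intro x hx
      simp only [mem_filter, Nat.mem_antidiagonalTuple] at hx ⊢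
      rw [Pi.sub_def, sum_tsub_distrib _ fun k _ => hsingle x hx.2 k, hx.1]
      simp
    · intro y _
      simp
    · intro x hx
      simp only [mem_filter] at hx
      exact tsub_add_cancel_of_le (hsingle x hx.2)
    · intro y _
      simp
  rw [← hshift, Vpart, mul_sum]
  exact sum_le_sum fun y _ => prod_partitionCount_add_single_le y i j

theorem Vpart_le_mul {s j n : ℕ} (hs : s ≠ 0) (hsj : s * j ≤ n) :
    Vpart s n ≤ s * ((j + 1) * partitionCount j * Vpart s (n - j)) := by
  have hjn : j ≤ n := le_trans (Nat.le_mul_of_pos_left j (Nat.pos_of_ne_zero hs)) hsj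
  have hcover : ∀ x ∈ Nat.antidiagonalTuple s n, ∃ i, j ≤ x i := fun x hx => by
    have : ∑ _i : Fin s, j ≤ ∑ i, x i := by simpa [Nat.mem_antidiagonalTuple.mp hx] using hsj
    obtain ⟨i, -, hi⟩ :=
      exists_le_of_sum_le (univ_nonempty_iff.mpr ⟨⟨0, Nat.pos_of_ne_zero hs⟩⟩) this
    exact ⟨i, hi⟩
  calc Vpart s n
      ≤ ∑ x ∈ Nat.antidiagonalTuple s n, ∑ i, if j ≤ x i then ∏ k, partitionCount (x k) else 0 :=
        sum_le_sum fun x hx => by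
          obtain ⟨i, hi⟩ := hcover x hx
          simpa [hi] using single_le_sum (f := fun i => if j ≤ x i then ∏ k, partitionCount (x k)
            else 0) (fun _ _ => Nat.zero_le _) (mem_univ i)
    _ = ∑ i, ∑ x ∈ (Nat.antidiagonalTuple s n).filter (fun x => j ≤ x i),
          ∏ k, partitionCount (x k) := by
        rw [sum_comm]
        simp only [sum_filter]
    _ ≤ ∑ _i : Fin s, (j + 1) * partitionCount j * Vpart s (n - j) :=
        sum_le_sum fun i _ => sum_filter_le_mul_Vpart i hjn
    _ = s * ((j + 1) * partitionCount j * Vpart s (n - j)) := by simp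

theorem Vpart_mul_harmonic_le {s : ℕ} (hs : s ≠ 0) (n : ℕ) :
    (Vpart s n : ℝ) * ∑ j ∈ range (n / s + 1), (1 / (j + 1) : ℝ) ≤ s * Vpart (s + 1) n := by
  have hterm : ∀ j ∈ range (n / s + 1), (Vpart s n : ℝ) * (1 / (j + 1)) ≤
      s * (partitionCount j * Vpart s (n - j) : ℕ) := by
    intro j hj
    have hsj : s * j ≤ n :=
      (Nat.mul_le_mul_left s (Nat.lt_succ_iff.mp (mem_range.mp hj))).trans (Nat.mul_div_le n s)
    have hV : (Vpart s n : ℝ) ≤ s * ((j + 1) * partitionCount j * Vpart s (n - j) : ℕ) := by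
      exact_mod_cast Vpart_le_mul hs hsj
    rw [mul_one_div, div_le_iff₀ (by positivity)]
    calc (Vpart s n : ℝ) ≤ _ := hV
      _ = _ := by push_cast; ring
  calc (Vpart s n : ℝ) * ∑ j ∈ range (n / s + 1), (1 / (j + 1) : ℝ)
      ≤ ∑ j ∈ range (n / s + 1), (s : ℝ) * (partitionCount j * Vpart s (n - j) : ℕ) := by
        rw [mul_sum]
        exact sum_le_sum hterm
    _ ≤ s * Vpart (s + 1) n := by
        rw [← mul_sum, Vpart_succ, Nat.cast_sum]
        gcongr
        exact Nat.div_le_self n s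

theorem tendsto_Vpart_div_Vpart_succ {s : ℕ} (hs : s ≠ 0) :
    Tendsto (fun n => (Vpart s n : ℝ) / Vpart (s + 1) n) atTop (nhds 0) := by
  have hH : Tendsto (fun n : ℕ => ∑ j ∈ range (n / s + 1), (1 / (j + 1) : ℝ)) atTop atTop :=
    Real.tendsto_sum_range_one_div_nat_succ_atTop.comp
      ((tendsto_add_atTop_nat 1).comp (Nat.tendsto_div_const_atTop hs))
  refine squeeze_zero (fun n => by positivity) (fun n => ?_)
    ((tendsto_const_nhds (x := (s : ℝ))).div_atTop hH)
  have hHpos : 0 < ∑ j ∈ range (n / s + 1), (1 / (j + 1) : ℝ) :=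
    sum_pos (fun _ _ => by positivity) nonempty_range_add_one
  rw [div_le_div_iff₀ (by exact_mod_cast Vpart_succ_pos s n) hHpos]
  exact Vpart_mul_harmonic_le hs n

theorem Vpart_zero_left_of_ne_zero {n : ℕ} (hn : n ≠ 0) : Vpart 0 n = 0 := by
  obtain ⟨m, rfl⟩ := Nat.exists_eq_succ_of_ne_zero hn
  simp [Vpart]

theorem stmt19 (r : ℕ) (hr : 1 ≤ r) :
    Filter.Tendsto (fun n : ℕ => (Vpart (r - 1) n : ℝ) / (Vpart r n : ℝ))
      Filter.atTop (nhds 0) := by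
  obtain ⟨s, rfl⟩ := Nat.exists_eq_add_of_le' hr
  rw [Nat.add_sub_cancel]
  rcases eq_or_ne s 0 with rfl | hs
  · refine tendsto_const_nhds.congr' ?_
    filter_upwards [eventually_ne_atTop 0] with n hn
    simp [Vpart_zero_left_of_ne_zero hn]
  · exact tendsto_Vpart_div_Vpart_succ hs
end
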